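/- For an input-enabled probabilistic automaton where AP = Act and L(s) = Act(s) (the set of enabled actions of s) for each state s, probabilistic bisimilarity lifted to distributions implies distribution-based bisimilarity: μ ∼_P ν implies μ ∼ ν. -/

import Mathlib

open Finset

structure ProbDist (S : Type) [Fintype S] where
  f : S → ℝ
  nonneg : ∀ s, 0 ≤ f s
  sum_one : ∑ s, f s = 1

/-- Probability assigned by a distribution to a set of states. -/
noncomputable def ProbDist.pr {S : Type} [Fintype S] (μ : ProbDist S) (C : Set S) : ℝ :=
  ∑ s, C.indicator μ.f s

/-- μ(A) := Σ_{s : L s = A} μ(s). -/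
noncomputable def pOf {S AP : Type} [Fintype S] (L : S → Finset AP) (μ : ProbDist S)
    (A : Finset AP) : ℝ :=
  μ.pr {s | L s = A}

/-- d_AP(μ,ν) := (1/2) Σ_{A ⊆ AP} |μ(A) − ν(A)|. -/
noncomputable def dAP {S AP : Type} [Fintype S] [Fintype AP] [DecidableEq AP]
    (L : S → Finset AP) (μ ν : ProbDist S) : ℝ :=
  (1 / 2) * ∑ A : Finset AP, |pOf L μ A - pOf L ν A|

/-- A (Segala) probabilistic automaton, image-finite. -/
structure PA (S Act AP : Type) [Fintype S] where
  trans : S → Act → ProbDist S → Prop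
  L : S → Finset AP
  imageFinite : ∀ s a, {μ | trans s a μ}.Finite

def PA.InputEnabled {S Act AP : Type} [Fintype S] (M : PA S Act AP) : Prop :=
  ∀ s a, ∃ μ, M.trans s a μ

noncomputable def PA.probOf {S Act AP : Type} [Fintype S] (M : PA S Act AP)
    (μ : ProbDist S) (A : Finset AP) : ℝ := pOf M.L μ A

/-- Combined transition s --a-->_P μ : μ is a convex combination of one-step successors. -/
def Combined {S Act AP : Type} [Fintype S] (M : PA S Act AP) (s : S) (a : Act)
    (μ : ProbDist S) : Prop :=
  ∃ (n : ℕ) (p : Fin n → ℝ) (ν : Fin n → ProbDist S),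
    (∀ i, 0 ≤ p i) ∧ (∑ i, p i = 1) ∧ (∀ i, M.trans s a (ν i)) ∧
    (∀ t, μ.f t = ∑ i, p i * (ν i).f t)

/-- Lifted transition μ --a--> μ' between distributions. -/
def Lifted {S Act AP : Type} [Fintype S] (M : PA S Act AP) (μ : ProbDist S) (a : Act)
    (μ' : ProbDist S) : Prop :=
  ∃ k : S → ProbDist S, (∀ s, 0 < μ.f s → Combined M s a (k s)) ∧
    (∀ t, μ'.f t = ∑ s, μ.f s * (k s).f t)

/-- ProbDist S carries the topology inherited from ℝ^{|S|}. -/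
noncomputable instance {S : Type} [Fintype S] : TopologicalSpace (ProbDist S) :=
  TopologicalSpace.induced (fun μ : ProbDist S => μ.f) inferInstance

/-- Distribution-based bisimulation. -/
def IsBisim {S Act AP : Type} [Fintype S] (M : PA S Act AP)
    (R : ProbDist S → ProbDist S → Prop) : Prop :=
  Symmetric R ∧ ∀ μ ν, R μ ν →
    (∀ A : Finset AP, M.probOf μ A = M.probOf ν A) ∧
    (∀ a μ', Lifted M μ a μ' → ∃ ν', Lifted M ν a ν' ∧ R μ' ν')

/-- Distribution-based bisimilarity. -/
def Bisimilar {S Act AP : Type} [Fintype S] (M : PA S Act AP) (μ ν : ProbDist S) : Prop :=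
  ∃ R, IsBisim M R ∧ R μ ν

/-- Probabilistic bisimulation (Segala), state-based. -/
def IsPBisim {S Act AP : Type} [Fintype S] (M : PA S Act AP) (R : S → S → Prop) : Prop :=
  Equivalence R ∧ ∀ s r, R s r → M.L s = M.L r ∧
    ∀ a μ, M.trans s a μ → ∃ ν, Combined M r a ν ∧
      ∀ t, μ.pr {u | R t u} = ν.pr {u | R t u}

def PBisimilar {S Act AP : Type} [Fintype S] (M : PA S Act AP) (s r : S) : Prop :=
  ∃ R, IsPBisim M R ∧ R s r

/-- μ ∼_P ν : equal probability on every class of the largest probabilistic bisimulation. -/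
def PBisimilarD {S Act AP : Type} [Fintype S] (M : PA S Act AP) (μ ν : ProbDist S) : Prop :=
  ∀ t, μ.pr {u | PBisimilar M t u} = ν.pr {u | PBisimilar M t u}

/-!
Lifted Segala bisimilarity `∼_P` is itself a distribution-based bisimulation. Labels are
constant on bisimilarity classes, so `μ ∼_P ν` gives `μ(A) = ν(A)`. Given a lifted transition
`μ --a--> μ' = ∑ₛ μ(s) kₛ`, every state `r` in the support of `ν` has a class of positive
`μ`-mass; `r` answers each `kₛ` (for `s` in its class) by a Segala match, and mixes these
answers with the weights `μ(s | [r])`. The resulting `ν' = ∑ᵣ ν(r) k'ᵣ` agrees with `μ'` on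
every class because `∑ᵣ ν(r) μ(s | [r]) = μ(s)` when `μ` and `ν` agree on classes.
Transitivity of `∼_P`, needed to speak of its classes, holds because the transitive closure
of bisimilarity is again a bisimulation.
-/

namespace ProbDist

variable {S : Type} [Fintype S]

lemma ext {μ ν : ProbDist S} (h : ∀ s, μ.f s = ν.f s) : μ = ν := by
  cases μ; cases ν; congr; exact funext h

lemma pr_nonneg (μ : ProbDist S) (C : Set S) : 0 ≤ μ.pr C :=
  Finset.sum_nonneg fun s _ => Set.indicator_nonneg (fun s _ => μ.nonneg s) s

lemma le_pr (μ : ProbDist S) {C : Set S} {s : S} (hs : s ∈ C) : μ.f s ≤ μ.pr C := by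
  have := Finset.single_le_sum (f := C.indicator μ.f)
    (fun t _ => Set.indicator_nonneg (fun t _ => μ.nonneg t) t) (Finset.mem_univ s)
  rwa [Set.indicator_of_mem hs] at this

lemma pr_empty (μ : ProbDist S) : μ.pr ∅ = 0 := by
  simp [pr]

lemma pr_eq_sum_mul_pr {ι : Type} [Fintype ι] {μ : ProbDist S} (p : ι → ℝ)
    (κ : ι → ProbDist S) (hμ : ∀ t, μ.f t = ∑ i, p i * (κ i).f t) (C : Set S) :
    μ.pr C = ∑ i, p i * (κ i).pr C := by
  simp only [pr, Finset.mul_sum]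
  rw [Finset.sum_comm]
  refine Finset.sum_congr rfl fun s _ => ?_
  by_cases hs : s ∈ C <;> simp [hs, hμ]

lemma pr_eq_sum_fiberwise {κ : Type} [Fintype κ] (μ : ProbDist S) (g : S → κ) (C : Set S) :
    μ.pr C = ∑ j, μ.pr (C ∩ g ⁻¹' {j}) := by
  classical
  simp only [pr]
  rw [Finset.sum_comm]
  refine Finset.sum_congr rfl fun s _ => ?_
  by_cases hs : s ∈ C <;> simp [hs, Set.indicator_apply]

lemma pr_eq_of_forall_class_eq {R : S → S → Prop} (hR : Equivalence R) {μ ν : ProbDist S}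
    (h : ∀ t, μ.pr {u | R t u} = ν.pr {u | R t u}) {C : Set S}
    (hC : ∀ u v, u ∈ C → R u v → v ∈ C) : μ.pr C = ν.pr C := by
  classical
  let st : Setoid S := ⟨R, hR⟩
  have hfiber (ρ : ProbDist S) (y : S) :
      ρ.pr (C ∩ Quotient.mk st ⁻¹' {⟦y⟧}) = if y ∈ C then ρ.pr {u | R y u} else 0 := by
    have hcls : Quotient.mk st ⁻¹' {⟦y⟧} = {u | R y u} :=
      Set.ext fun u => Quotient.eq.trans ⟨hR.symm, hR.symm⟩
    rw [hcls]
    split_ifs with hy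
    · rw [show C ∩ {u | R y u} = {u | R y u} from
        Set.inter_eq_right.mpr fun u hu => hC y u hy hu]
    · rw [show C ∩ {u | R y u} = ∅ from
        Set.eq_empty_of_forall_notMem fun u hu => hy (hC u y hu.1 (hR.symm hu.2)), pr_empty]
  rw [pr_eq_sum_fiberwise μ (Quotient.mk st), pr_eq_sum_fiberwise ν (Quotient.mk st)]
  refine Finset.sum_congr rfl fun q _ => q.inductionOn fun y => ?_
  rw [hfiber, hfiber, h]

def bind {ι : Type} [Fintype ι] (p : ProbDist ι) (κ : ι → ProbDist S) : ProbDist S where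
  f t := ∑ i, p.f i * (κ i).f t
  nonneg t := Finset.sum_nonneg fun i _ => mul_nonneg (p.nonneg i) ((κ i).nonneg t)
  sum_one := by
    rw [Finset.sum_comm]
    simp_rw [← Finset.mul_sum, sum_one, mul_one]
    exact p.sum_one

lemma pr_bind {ι : Type} [Fintype ι] (p : ProbDist ι) (κ : ι → ProbDist S) (C : Set S) :
    (p.bind κ).pr C = ∑ i, p.f i * (κ i).pr C :=
  pr_eq_sum_mul_pr p.f κ (fun _ => rfl) C

lemma pr_bind_congr {ι : Type} [Fintype ι] (p : ProbDist ι) {κ κ' : ι → ProbDist S}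
    {C : Set S} (h : ∀ i, 0 < p.f i → (κ i).pr C = (κ' i).pr C) :
    (p.bind κ).pr C = (p.bind κ').pr C := by
  rw [pr_bind, pr_bind]
  refine Finset.sum_congr rfl fun i _ => ?_
  rcases (p.nonneg i).eq_or_lt with hi | hi
  · rw [← hi, zero_mul, zero_mul]
  · rw [h i hi]

lemma bind_bind {ι κ : Type} [Fintype ι] [Fintype κ] (p : ProbDist ι) (q : ι → ProbDist κ)
    (ρ : κ → ProbDist S) : (p.bind q).bind ρ = p.bind fun i => (q i).bind ρ := by
  refine ext fun t => ?_
  simp only [bind, Finset.sum_mul, Finset.mul_sum, mul_assoc]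
  exact Finset.sum_comm

/-- `μ` conditioned on `C`; a junk value (`μ` itself) when `μ(C) = 0`. -/
noncomputable def cond (μ : ProbDist S) (C : Set S) : ProbDist S :=
  if h : μ.pr C = 0 then μ else
    { f := fun s => C.indicator μ.f s / μ.pr C
      nonneg := fun s =>
        div_nonneg (Set.indicator_nonneg (fun s _ => μ.nonneg s) s) (μ.pr_nonneg C)
      sum_one := by rw [← Finset.sum_div]; exact div_self h }

lemma cond_f (μ : ProbDist S) {C : Set S} (h : μ.pr C ≠ 0) (s : S) :
    (μ.cond C).f s = C.indicator μ.f s / μ.pr C := by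
  simp [cond, h]

lemma mem_and_pos_of_cond_pos (μ : ProbDist S) {C : Set S} (h : μ.pr C ≠ 0) {s : S}
    (hs : 0 < (μ.cond C).f s) : s ∈ C ∧ 0 < μ.f s := by
  rw [cond_f μ h] at hs
  by_cases hsC : s ∈ C
  · rw [Set.indicator_of_mem hsC] at hs
    exact ⟨hsC, (μ.nonneg s).lt_of_ne fun h0 => by simp [← h0] at hs⟩
  · rw [Set.indicator_of_notMem hsC, zero_div] at hs
    exact absurd hs (lt_irrefl 0)

lemma bind_cond_class {R : S → S → Prop} (hR : Equivalence R) {μ ν : ProbDist S}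
    (h : ∀ t, μ.pr {u | R t u} = ν.pr {u | R t u}) :
    ν.bind (fun r => μ.cond {u | R r u}) = μ := by
  refine ext fun s => ?_
  have hcond (r : S) : ν.f r * (μ.cond {u | R r u}).f s
      = ν.f r * ({u | R r u}.indicator μ.f s / μ.pr {u | R r u}) := by
    by_cases h0 : μ.pr {u | R r u} = 0
    · have : ν.f r = 0 :=
        le_antisymm ((ν.le_pr (hR.refl r)).trans_eq ((h r).symm.trans h0)) (ν.nonneg r)
      rw [this, zero_mul, zero_mul]
    · rw [cond_f μ h0]
  have hswap (r : S) : ν.f r * ({u | R r u}.indicator μ.f s / μ.pr {u | R r u})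
      = {u | R s u}.indicator ν.f r * (μ.f s / μ.pr {u | R s u}) := by
    by_cases hrs : R r s
    · have hcls : {u | R r u} = {u | R s u} :=
        Set.ext fun u => ⟨hR.trans (hR.symm hrs), hR.trans hrs⟩
      rw [hcls, Set.indicator_of_mem (show s ∈ {u | R s u} from hR.refl s),
        Set.indicator_of_mem (show r ∈ {u | R s u} from hR.symm hrs)]
    · rw [Set.indicator_of_notMem (show s ∉ {u | R r u} from hrs),
        Set.indicator_of_notMem (show r ∉ {u | R s u} from fun hsr => hrs (hR.symm hsr))]
      simp
  change ∑ r, ν.f r * (μ.cond {u | R r u}).f s = μ.f s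
  simp_rw [hcond, hswap]
  rw [← Finset.sum_mul, ← pr, ← h s]
  by_cases h0 : μ.pr {u | R s u} = 0
  · have : μ.f s = 0 := le_antisymm ((μ.le_pr (hR.refl s)).trans_eq h0) (μ.nonneg s)
    rw [this, h0, zero_mul]
  · exact mul_div_cancel₀ _ h0

end ProbDist

section Combined

variable {S Act AP : Type} [Fintype S] {M : PA S Act AP}

lemma combined_of_trans {s : S} {a : Act} {μ : ProbDist S} (h : M.trans s a μ) :
    Combined M s a μ :=
  ⟨1, fun _ => 1, fun _ => μ, fun _ => zero_le_one, by simp, fun _ => h, fun t => by simp⟩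

lemma combined_of_fintype {ι : Type} [Fintype ι] {s : S} {a : Act} (p : ι → ℝ)
    (ν : ι → ProbDist S) (hp : ∀ i, 0 ≤ p i) (hs : ∑ i, p i = 1)
    (hν : ∀ i, M.trans s a (ν i)) {μ : ProbDist S}
    (hμ : ∀ t, μ.f t = ∑ i, p i * (ν i).f t) :
    Combined M s a μ := by
  let e := (Fintype.equivFin ι).symm
  refine ⟨Fintype.card ι, p ∘ e, ν ∘ e, fun i => hp _, ?_, fun i => hν _, fun t => ?_⟩
  · exact (e.sum_comp p).trans hs
  · exact (hμ t).trans (e.sum_comp fun i => p i * (ν i).f t).symm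

lemma combined_bind {ι : Type} [Fintype ι] {s : S} {a : Act} (p : ProbDist ι)
    (κ : ι → ProbDist S) (hκ : ∀ i, 0 < p.f i → Combined M s a (κ i)) :
    Combined M s a (p.bind κ) := by
  classical
  have hsupp (g : ι → ℝ) (hg : ∀ i, p.f i = 0 → g i = 0) :
      ∑ i : {i // 0 < p.f i}, g i = ∑ i, g i := by
    rw [← Finset.sum_subtype (Finset.univ.filter fun i => 0 < p.f i) (by simp)]
    refine Finset.sum_filter_of_ne fun i _ hi => (p.nonneg i).lt_of_ne fun h0 => hi ?_
    exact hg i h0.symm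
  choose n q ν hq hqs hν hνt using fun i : {i // 0 < p.f i} => hκ i i.2
  refine combined_of_fintype (fun x : Σ i, Fin (n i) => p.f x.1 * q x.1 x.2)
    (fun x => ν x.1 x.2) (fun x => mul_nonneg (p.nonneg _) (hq _ _)) ?_
    (fun x => hν x.1 x.2) fun t => ?_
  · simp_rw [Fintype.sum_sigma, ← Finset.mul_sum, hqs, mul_one]
    rw [hsupp p.f fun _ h => h]
    exact p.sum_one
  · simp_rw [Fintype.sum_sigma, mul_assoc, ← Finset.mul_sum, ← hνt]
    exact (hsupp (fun i => p.f i * (κ i).f t) fun i h => by rw [h, zero_mul]).symm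

end Combined

section ProbabilisticBisimulation

variable {S Act AP : Type} [Fintype S] {M : PA S Act AP}

lemma IsPBisim.exists_combined_match {R : S → S → Prop} (hR : IsPBisim M R) {s r : S}
    (hsr : R s r) {a : Act} {μ : ProbDist S} (hμ : Combined M s a μ) :
    ∃ ν, Combined M r a ν ∧ ∀ t, μ.pr {u | R t u} = ν.pr {u | R t u} := by
  obtain ⟨n, p, μs, hp, hs, hμs, hμ⟩ := hμ
  choose κ hκ hκpr using fun i => (hR.2 s r hsr).2 a (μs i) (hμs i)
  let P : ProbDist (Fin n) := ⟨p, hp, hs⟩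
  refine ⟨P.bind κ, combined_bind P κ fun i _ => hκ i, fun t => ?_⟩
  rw [ProbDist.pr_eq_sum_mul_pr p μs hμ, ProbDist.pr_bind]
  exact Finset.sum_congr rfl fun i _ => by rw [hκpr i t]

lemma IsPBisim.exists_combined_match_of_le {R R' : S → S → Prop} (hR : IsPBisim M R)
    (hRR' : ∀ u v, R u v → R' u v) (hR' : ∀ {u v w}, R' u v → R' v w → R' u w) {s r : S}
    (hsr : R s r) {a : Act} {μ : ProbDist S} (hμ : Combined M s a μ) :
    ∃ ν, Combined M r a ν ∧ ∀ t, μ.pr {u | R' t u} = ν.pr {u | R' t u} := by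
  obtain ⟨ν, hν, hpr⟩ := hR.exists_combined_match hsr hμ
  exact ⟨ν, hν, fun t => ProbDist.pr_eq_of_forall_class_eq hR.1 hpr
    fun u v htu huv => hR' htu (hRR' u v huv)⟩

lemma isPBisim_eq : IsPBisim M (Eq : S → S → Prop) := by
  refine ⟨eq_equivalence, fun s r hsr => ?_⟩
  subst hsr
  exact ⟨rfl, fun a μ hμ => ⟨μ, combined_of_trans hμ, fun t => rfl⟩⟩

lemma PBisimilar.refl (s : S) : PBisimilar M s s :=
  ⟨Eq, isPBisim_eq, rfl⟩

lemma PBisimilar.symm {s r : S} : PBisimilar M s r → PBisimilar M r s :=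
  fun ⟨R, hR, hsr⟩ => ⟨R, hR, hR.1.symm hsr⟩

lemma PBisimilar.label_eq {s r : S} : PBisimilar M s r → M.L s = M.L r :=
  fun ⟨_, hR, hsr⟩ => (hR.2 s r hsr).1

lemma exists_combined_match_of_transGen {s r : S}
    (h : Relation.TransGen (PBisimilar M) s r) {a : Act} {μ : ProbDist S}
    (hμ : Combined M s a μ) : ∃ ν, Combined M r a ν ∧
      ∀ t, μ.pr {u | Relation.TransGen (PBisimilar M) t u} =
        ν.pr {u | Relation.TransGen (PBisimilar M) t u} := by
  have hstep {s r : S} (hsr : PBisimilar M s r) {μ : ProbDist S} (hμ : Combined M s a μ) :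
      ∃ ν, Combined M r a ν ∧ ∀ t, μ.pr {u | Relation.TransGen (PBisimilar M) t u} =
        ν.pr {u | Relation.TransGen (PBisimilar M) t u} := by
    obtain ⟨R, hR, hsr⟩ := hsr
    exact hR.exists_combined_match_of_le (fun u v huv => .single ⟨R, hR, huv⟩)
      Relation.TransGen.trans hsr hμ
  induction h with
  | single hsr => exact hstep hsr hμ
  | tail _ hmr ih =>
    obtain ⟨ν₁, hν₁, hpr₁⟩ := ih
    obtain ⟨ν₂, hν₂, hpr₂⟩ := hstep hmr hν₁
    exact ⟨ν₂, hν₂, fun t => (hpr₁ t).trans (hpr₂ t)⟩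

lemma isPBisim_transGen : IsPBisim M (Relation.TransGen (PBisimilar M)) := by
  refine ⟨⟨fun s => .single (.refl s), fun h => Relation.transGen_swap.mp
    (Relation.TransGen.mono (fun _ _ => PBisimilar.symm) _ _ h), Relation.TransGen.trans⟩,
    fun s r hsr => ⟨?_, fun _ _ hμ =>
      exists_combined_match_of_transGen hsr (combined_of_trans hμ)⟩⟩
  induction hsr with
  | single h => exact h.label_eq
  | tail _ h ih => exact ih.trans h.label_eq

lemma PBisimilar.trans {s m r : S} (hsm : PBisimilar M s m) (hmr : PBisimilar M m r) :
    PBisimilar M s r :=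
  ⟨_, isPBisim_transGen, (Relation.TransGen.single hsm).tail hmr⟩

lemma pBisimilar_equivalence : Equivalence (PBisimilar M) :=
  ⟨PBisimilar.refl, PBisimilar.symm, PBisimilar.trans⟩

lemma PBisimilar.exists_combined_match {s r : S} (h : PBisimilar M s r) {a : Act}
    {μ : ProbDist S} (hμ : Combined M s a μ) : ∃ ν, Combined M r a ν ∧
      ∀ t, μ.pr {u | PBisimilar M t u} = ν.pr {u | PBisimilar M t u} := by
  obtain ⟨R, hR, hsr⟩ := h
  exact hR.exists_combined_match_of_le (fun u v huv => ⟨R, hR, huv⟩) PBisimilar.trans hsr hμ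

end ProbabilisticBisimulation

section DistributionBisimulation

variable {S Act AP : Type} [Fintype S] {M : PA S Act AP}

lemma PBisimilarD.symm {μ ν : ProbDist S} (h : PBisimilarD M μ ν) : PBisimilarD M ν μ :=
  fun t => (h t).symm

lemma PBisimilarD.probOf_eq {μ ν : ProbDist S} (h : PBisimilarD M μ ν) (A : Finset AP) :
    M.probOf μ A = M.probOf ν A :=
  ProbDist.pr_eq_of_forall_class_eq pBisimilar_equivalence h
    fun _ _ (hu : M.L _ = A) huv => huv.label_eq.symm.trans hu

lemma PBisimilarD.exists_lifted_match {μ ν μ' : ProbDist S} (h : PBisimilarD M μ ν)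
    {a : Act} (hμ' : Lifted M μ a μ') :
    ∃ ν', Lifted M ν a ν' ∧ PBisimilarD M μ' ν' := by
  obtain ⟨k, hk, hμ'⟩ := hμ'
  have hmatch (s r : S) : ∃ κ : ProbDist S, 0 < μ.f s → PBisimilar M s r →
      Combined M r a κ ∧ PBisimilarD M (k s) κ := by
    by_cases hsr : 0 < μ.f s ∧ PBisimilar M s r
    · obtain ⟨κ, hκ, hpr⟩ := hsr.2.exists_combined_match (hk s hsr.1)
      exact ⟨κ, fun _ _ => ⟨hκ, hpr⟩⟩
    · exact ⟨μ', fun hs hsr' => absurd ⟨hs, hsr'⟩ hsr⟩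
  choose K hK using hmatch
  let cls (r : S) : Set S := {u | PBisimilar M r u}
  have hsupp {r : S} (hr : 0 < ν.f r) {s : S} (hs : 0 < (μ.cond (cls r)).f s) :
      PBisimilar M s r ∧ 0 < μ.f s := by
    have hmass : μ.pr (cls r) ≠ 0 :=
      (h r).trans_ne (hr.trans_le (ν.le_pr (PBisimilar.refl r))).ne'
    obtain ⟨hrs, hμs⟩ := μ.mem_and_pos_of_cond_pos hmass hs
    exact ⟨hrs.symm, hμs⟩
  let k' (r : S) : ProbDist S := (μ.cond (cls r)).bind fun s => K s r
  refine ⟨ν.bind k', ⟨k', fun r hr => combined_bind _ _ fun s hs => ?_, fun _ => rfl⟩,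
    fun t => ?_⟩
  · obtain ⟨hsr, hμs⟩ := hsupp hr hs
    exact (hK s r hμs hsr).1
  calc μ'.pr (cls t) = (μ.bind k).pr (cls t) := by
        rw [ProbDist.pr_eq_sum_mul_pr μ.f k hμ', ProbDist.pr_bind]
    _ = (ν.bind fun r => (μ.cond (cls r)).bind k).pr (cls t) := by
        rw [← ProbDist.bind_bind, ProbDist.bind_cond_class pBisimilar_equivalence h]
    _ = (ν.bind k').pr (cls t) := by
        refine ProbDist.pr_bind_congr ν fun r hr => ProbDist.pr_bind_congr _ fun s hs => ?_
        obtain ⟨hsr, hμs⟩ := hsupp hr hs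
        exact (hK s r hμs hsr).2 t

theorem isBisim_pBisimilarD : IsBisim M (PBisimilarD M) :=
  ⟨fun _ _ h => h.symm,
    fun _ _ h => ⟨h.probOf_eq, fun _ _ hμ' => h.exists_lifted_match hμ'⟩⟩

end DistributionBisimulation

theorem stmt7_general {S Act : Type} [Fintype S] (M : PA S Act Act)
    (μ ν : ProbDist S) (h : PBisimilarD M μ ν) :
    Bisimilar M μ ν :=
  ⟨PBisimilarD M, isBisim_pBisimilarD, h⟩

theorem stmt7 {S Act : Type} [Fintype S] (M : PA S Act Act) (hM : M.InputEnabled)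
    (hL : ∀ s, (↑(M.L s) : Set Act) = {a | ∃ μ, M.trans s a μ})
    (μ ν : ProbDist S) (h : PBisimilarD M μ ν) :
    Bisimilar M μ ν :=
  stmt7_general M μ ν h
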